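/- Let S be a nonzero Lie algebra over a field k of characteristic 0, and let L = S × S be the left Leibniz algebra with product (a,a')(b,b') = ([a,b],[a,b']). Then for every x ∈ L such that the left multiplication operator d_x is nilpotent, the automorphism exp(d_x) of L maps the subalgebra S₀ = S × {0} onto itself; consequently the complement S₁ = {(s,s) : s ∈ S} of K = {0} × S is not of the form exp(d_x)(S₀) for any such x, i.e. the two Levi complements S₀ and S₁ are not conjugate under exponentials of inner derivations. -/

import Mathlib

/-!
Left multiplication by `x = (a, a')` is `ad a × ad a`, so `exp(d_x) = E × E` with `E = exp(ad a)`,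
and `E` is invertible with inverse `exp(-ad a)`. Hence `exp(d_x)(S × 0) = E(S) × 0 = S × 0`, which is
not the diagonal `S₁` as soon as `S ≠ 0`.
-/

/-- The product of the split extension `L = S × S` of the left `S`-module `K = S`
(with zero right action) by the Lie algebra `S`: `(a,a')(b,b') = ([a,b],[a,b'])`. -/
def splitProd {S : Type*} [LieRing S] : S × S → S × S → S × S :=
  fun x y => (⁅x.1, y.1⁆, ⁅x.1, y.2⁆)

/-- The left multiplication operator `d_x : L → L`, `d_x(y) = xy`, of the split
extension `L = S × S`, as a linear endomorphism. -/
def leftMulOp (k : Type*) {S : Type*} [Field k] [LieRing S] [LieAlgebra k S]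
    (x : S × S) : Module.End k (S × S) where
  toFun y := splitProd x y
  map_add' y z := by simp [splitProd, Prod.ext_iff]
  map_smul' c y := by simp [splitProd, Prod.ext_iff]

open scoped Classical

/-- The exponential of a nilpotent endomorphism `f` (in characteristic `0`):
`exp f = Σ_{i < n} fⁱ / i!` where `fⁿ = 0`. Defined to be `1` if `f` is not nilpotent. -/
noncomputable def expNil {k M : Type*} [Field k] [AddCommGroup M] [Module k M]
    (f : Module.End k M) : Module.End k M :=
  if h : IsNilpotent f then ∑ i ∈ Finset.range h.choose, ((i.factorial : k)⁻¹) • f ^ i else 1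

open Finset LinearMap

section

variable {R M N : Type*} [Semiring R] [AddCommMonoid M] [Module R M] [AddCommMonoid N]
  [Module R N]

theorem LinearMap.prodMap_pow (f : Module.End R M) (g : Module.End R N) (n : ℕ) :
    f.prodMap g ^ n = (f ^ n).prodMap (g ^ n) :=
  (map_pow (prodMapRingHom R M N) (f, g) n).symm

theorem LinearMap.prodMap_eq_zero_iff {f : Module.End R M} {g : Module.End R N} :
    f.prodMap g = 0 ↔ f = 0 ∧ g = 0 := by
  refine ⟨fun h => ⟨?_, ?_⟩, fun ⟨hf, hg⟩ => hf ▸ hg ▸ prodMap_zero⟩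
  · ext m
    simpa using congr(($h (m, 0)).1)
  · ext n
    simpa using congr(($h (0, n)).2)

theorem LinearMap.map_prod_top_bot_of_surjective {M₂ N₂ : Type*} [AddCommMonoid M₂]
    [Module R M₂] [AddCommMonoid N₂] [Module R N₂] {f : M →ₗ[R] M₂}
    (hf : Function.Surjective f) (g : N →ₗ[R] N₂) :
    ((⊤ : Submodule R M).prod (⊥ : Submodule R N)).map (f.prodMap g) =
      (⊤ : Submodule R M₂).prod ⊥ := by
  rw [prodMap_map_prod, Submodule.map_top, range_eq_top.2 hf, Submodule.map_bot]

theorem Submodule.prod_top_bot_ne_range_prod_id [Nontrivial M] :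
    (⊤ : Submodule R M).prod ⊥ ≠ range ((LinearMap.id : M →ₗ[R] M).prod LinearMap.id) := by
  intro h
  obtain ⟨m, hm⟩ := exists_ne (0 : M)
  have hmm : (m, m) ∈ (⊤ : Submodule R M).prod ⊥ := h ▸ ⟨m, rfl⟩
  exact hm ((mem_bot R).1 (mem_prod.1 hmm).2)

end

section

variable {k M N : Type*} [Field k] [CharZero k] [AddCommGroup M] [Module k M] [AddCommGroup N]
  [Module k N]

/-- Lets `expNil` be compared with Mathlib's `IsNilpotent.exp`, which needs a `ℚ`-module. -/
abbrev Module.End.ratModule : Module ℚ (Module.End k M) := Module.compHom _ (algebraMap ℚ k)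

attribute [local instance] Module.End.ratModule

theorem expNil_eq_exp {f : Module.End k M} (hf : IsNilpotent f) :
    expNil f = IsNilpotent.exp f := by
  rw [expNil, dif_pos hf, IsNilpotent.exp_eq_sum hf.choose_spec]
  refine sum_congr rfl fun i _ => ?_
  rw [← map_natCast (algebraMap ℚ k), ← map_inv₀]
  rfl

theorem expNil_eq_sum {f : Module.End k M} {n : ℕ} (hn : f ^ n = 0) :
    expNil f = ∑ i ∈ range n, ((i.factorial : k)⁻¹) • f ^ i := by
  rw [expNil_eq_exp ⟨n, hn⟩, IsNilpotent.exp_eq_sum hn]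
  refine sum_congr rfl fun i _ => ?_
  rw [← map_natCast (algebraMap ℚ k), ← map_inv₀]
  rfl

theorem isUnit_expNil (f : Module.End k M) : IsUnit (expNil f) := by
  by_cases hf : IsNilpotent f
  · exact expNil_eq_exp hf ▸ IsNilpotent.isUnit_exp hf
  · rw [expNil, dif_neg hf]
    exact isUnit_one

theorem expNil_prodMap {f : Module.End k M} {g : Module.End k N}
    (h : IsNilpotent (f.prodMap g)) :
    expNil (f.prodMap g) = (expNil f).prodMap (expNil g) := by
  obtain ⟨n, hn⟩ := h
  obtain ⟨hf, hg⟩ : f ^ n = 0 ∧ g ^ n = 0 := by rwa [prodMap_pow, prodMap_eq_zero_iff] at hn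
  rw [expNil_eq_sum hn, expNil_eq_sum hf, expNil_eq_sum hg]
  ext m <;> simp [prodMap_pow, Prod.fst_sum, Prod.snd_sum]

end

theorem leftMulOp_eq_prodMap_ad (k : Type*) {S : Type*} [Field k] [LieRing S] [LieAlgebra k S]
    (x : S × S) : leftMulOp k x = (LieAlgebra.ad k S x.1).prodMap (LieAlgebra.ad k S x.1) :=
  rfl

/-- For every `x` in the split extension `L = S × S` with `d_x` nilpotent, the
automorphism `exp(d_x)` maps `S₀ = S × {0}` onto itself; hence the complement
`S₁ = {(s,s)}` of `K = {0} × S` is not conjugate to `S₀` under any such `exp(d_x)`. -/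
theorem complements_not_conjugate {k S : Type*} [Field k] [CharZero k]
    [LieRing S] [LieAlgebra k S] [Nontrivial S] :
    ∀ x : S × S, IsNilpotent (leftMulOp k x) →
      Submodule.map (leftMulOp k x |> expNil)
          ((⊤ : Submodule k S).prod (⊥ : Submodule k S)) =
        (⊤ : Submodule k S).prod (⊥ : Submodule k S) ∧
      Submodule.map (leftMulOp k x |> expNil)
          ((⊤ : Submodule k S).prod (⊥ : Submodule k S)) ≠
        LinearMap.range ((LinearMap.id : S →ₗ[k] S).prod LinearMap.id) := by
  intro x hx
  rw [leftMulOp_eq_prodMap_ad] at hx ⊢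
  set E := expNil (LieAlgebra.ad k S x.1)
  have hE : Function.Surjective E := ((Module.End.isUnit_iff E).1 (isUnit_expNil _)).surjective
  have hS₀ := map_prod_top_bot_of_surjective hE E
  rw [← expNil_prodMap hx] at hS₀
  exact ⟨hS₀, hS₀.symm ▸ Submodule.prod_top_bot_ne_range_prod_id⟩
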